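/- There is an absolute constant c > 0 such that the following holds. Let δ ∈ (0,1] and H, N ∈ ℕ with δN ≤ H ≤ N, and let f : ℤ² → ℂ be a 1-bounded function supported on [N]². Then: (i) if ‖f‖_{e_1·[±H], e_2·[±H]}^4 ≥ δN², there are 1-bounded b_1, b_2 : ℤ → ℂ with Re(∑_{x,y} f(x,y) b_1(x) b_2(y)) ≥ c·δ³·N²; (ii) if ‖f‖_{e_1·[±H], (e_2−e_1)·[±H]}^4 ≥ δN², there are 1-bounded b_1, b_2 : ℤ → ℂ with Re(∑_{x,y} f(x,y) b_1(x+y) b_2(y)) ≥ c·δ³·N²; (iii) if ‖f‖_{e_2·[±H], (e_2−e_1)·[±H]}^4 ≥ δN², there are 1-bounded b_1, b_2 : ℤ → ℂ with Re(∑_{x,y} f(x,y) b_1(x) b_2(x+y)) ≥ c·δ³·N². -/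

import Mathlib

open Finset

noncomputable section

/-- `[N] = {0, 1, ..., N-1}` as a finset of integers. -/
def I0 (N : ℤ) : Finset ℤ := Finset.Ico 0 N

/-- `[±N] = {-N+1, ..., N-1}` as a finset of integers. -/
def Ipm (N : ℤ) : Finset ℤ := Finset.Ioo (-N) N

/-- `f` is 1-bounded. -/
def Bounded1 {α : Type*} (f : α → ℂ) : Prop := ∀ x, ‖f x‖ ≤ 1

/-- `f : ℤ² → ℂ` is supported on `[N]²`. -/
def SuppOn2 (N : ℤ) (f : ℤ × ℤ → ℂ) : Prop :=
  ∀ p : ℤ × ℤ, f p ≠ 0 → p.1 ∈ I0 N ∧ p.2 ∈ I0 N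

/-- Iterated complex conjugation `𝒞^n`. -/
def conjIter (n : ℕ) (z : ℂ) : ℂ := if Even n then z else (starRingEnd ℂ) z

/-- The `2^s`-th power of the box norm of `f` along the finsets `E 0, ..., E (s-1)`. -/
def boxPow {G : Type*} [AddCommGroup G] {s : ℕ} (E : Fin s → Finset G) (f : G → ℂ) : ℂ :=
  (∑ h ∈ Fintype.piFinset E, ∑ h' ∈ Fintype.piFinset E,
      ∑' x : G, ∏ ε : Fin s → Bool,
        conjIter (Finset.univ.filter (fun i => ε i)).card
          (f (x + ∑ i, if ε i then h' i else h i)))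
    / ((∏ i, ((E i).card : ℂ)) ^ 2)

/-- The dilate `{v·h : h ∈ S} ⊆ ℤ²` of a finset `S ⊆ ℤ` along the direction `v ∈ ℤ²`. -/
def dil (v : ℤ × ℤ) (S : Finset ℤ) : Finset (ℤ × ℤ) := S.image (fun h => (v.1 * h, v.2 * h))

open scoped Pointwise ComplexConjugate

/-!
Write `E = [±H]`. The box norm along `e₁·E, e₂·E` expands as the sum of `|P(a, b + h₂, b + h₂')|²`
over `a, b ∈ ℤ` and `h₂, h₂' ∈ E`, where `P(a, y, y') = ∑_{h ∈ E} f(a + h, y) · conj f(a + h, y')`.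
Only `O(N²)` pairs `(a, b)` contribute, so pigeonholing gives a triple `(a, b, y')` with
`∑_{h₂ ∈ E} |P(a, b + h₂, y')|² ≳ δ|E|³`; this sum divided by `|E|` is exactly the correlation of
`f` with `b₁ = conj f(·, y')` cut off to `a + E` and `b₂ = conj P(a, ·, y') / |E|` cut off to
`b + E`, and `|E| ≥ δN` turns it into `δ³N²/16`. The other two pairs of directions `v, w` are
reduced to `e₁, e₂` by the automorphism of `ℤ²` sending `e₁, e₂` to `v, w`, which preserves box
norms and moves the support of `f` into `[2N] × [±N]`.
-/

theorem sum_piFinset_fin_two {α M : Type*} [AddCommMonoid M] (E₁ E₂ : Finset α)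
    (F : (Fin 2 → α) → M) :
    ∑ h ∈ Fintype.piFinset ![E₁, E₂], F h = ∑ h₁ ∈ E₁, ∑ h₂ ∈ E₂, F ![h₁, h₂] := by
  rw [← sum_product' (f := fun h₁ h₂ => F ![h₁, h₂])]
  refine Finset.sum_equiv (finTwoArrowEquiv α) (fun h => ?_) fun h _ => ?_
  · simp [Fintype.mem_piFinset, Fin.forall_fin_two]
  · congr 1; ext i; fin_cases i <;> rfl

theorem prod_fin_two_bool {M : Type*} [CommMonoid M] (F : (Fin 2 → Bool) → M) :
    ∏ ε : Fin 2 → Bool, F ε =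
      F ![true, true] * (F ![true, false] * (F ![false, true] * F ![false, false])) := by
  rw [← (finTwoArrowEquiv Bool).symm.prod_comp, Fintype.prod_prod_type]
  simp [finTwoArrowEquiv, mul_assoc]

theorem Finset.exists_sum_le_card_mul {ι : Type*} [Nonempty ι] (s : Finset ι) (F : ι → ℝ) :
    ∃ i, ∑ j ∈ s, F j ≤ #s * F i := by
  rcases s.eq_empty_or_nonempty with rfl | hs
  · simp
  obtain ⟨i, -, hi⟩ := s.exists_max_image F hs
  exact ⟨i, by simpa using sum_le_card_nsmul s F (F i) hi⟩

theorem boxPow_image_addEquiv {G G' : Type*} [AddCommGroup G] [AddCommGroup G'] [DecidableEq G']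
    (φ : G ≃+ G') {s : ℕ} (E : Fin s → Finset G) (f : G' → ℂ) :
    boxPow (fun i => (E i).image φ) f = boxPow E (f ∘ φ) := by
  have hinj : Function.Injective fun (h : Fin s → G) (i : Fin s) => φ (h i) :=
    fun h h' hh => funext fun i => φ.injective (congrFun hh i)
  unfold boxPow
  congr 1
  · rw [Fintype.piFinset_image (fun _ => φ), sum_image fun h _ h' _ hh => hinj hh]
    refine sum_congr rfl fun h _ => ?_
    rw [sum_image fun h _ h' _ hh => hinj hh]
    refine sum_congr rfl fun h' _ => ?_
    rw [← φ.toEquiv.tsum_eq]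
    refine tsum_congr fun x => prod_congr rfl fun ε _ => ?_
    simp only [AddEquiv.toEquiv_eq_coe, EquivLike.coe_coe, Function.comp_apply, map_add,
      map_sum, apply_ite φ]
  · simp only [card_image_of_injective _ φ.injective]

theorem boxPow_pair {G : Type*} [AddCommGroup G] (E₁ E₂ : Finset G) (f : G → ℂ) :
    boxPow ![E₁, E₂] f =
      (∑ h₁ ∈ E₁, ∑ h₂ ∈ E₂, ∑ h₁' ∈ E₁, ∑ h₂' ∈ E₂, ∑' x : G,
        f (x + h₁ + h₂) * conj (f (x + h₁' + h₂)) *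
          (conj (f (x + h₁ + h₂')) * f (x + h₁' + h₂')))
      / ((#E₁ : ℂ) * #E₂) ^ 2 := by
  unfold boxPow
  simp only [sum_piFinset_fin_two, prod_fin_two_bool, Fin.sum_univ_two, Fin.prod_univ_two,
    Matrix.cons_val_zero, Matrix.cons_val_one]
  congr 1
  refine sum_congr rfl fun h₁ _ => sum_congr rfl fun h₂ _ => sum_congr rfl fun h₁' _ =>
    sum_congr rfl fun h₂' _ => tsum_congr fun x => ?_
  simp +decide [conjIter, add_assoc]
  ring

theorem dil_injective {v : ℤ × ℤ} (hv : v ≠ 0) :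
    Function.Injective fun h : ℤ => (v.1 * h, v.2 * h) := by
  intro a b hab
  simp only [Prod.mk.injEq] at hab
  by_cases h1 : v.1 = 0
  · exact mul_left_cancel₀ (fun h2 => hv (Prod.ext h1 h2)) hab.2
  · exact mul_left_cancel₀ h1 hab.1

theorem sum_dil {M : Type*} [AddCommMonoid M] {v : ℤ × ℤ} (hv : v ≠ 0) (S : Finset ℤ)
    (F : ℤ × ℤ → M) : ∑ a ∈ dil v S, F a = ∑ h ∈ S, F (v.1 * h, v.2 * h) :=
  sum_image fun _ _ _ _ hab => dil_injective hv hab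

theorem card_dil {v : ℤ × ℤ} (hv : v ≠ 0) (S : Finset ℤ) : #(dil v S) = #S :=
  card_image_of_injective _ (dil_injective hv)

theorem image_dil (φ : ℤ × ℤ →+ ℤ × ℤ) (v : ℤ × ℤ) (S : Finset ℤ) :
    (dil v S).image φ = dil (φ v) S := by
  unfold dil
  rw [image_image]
  refine image_congr fun h _ => ?_
  have hsmul : ∀ u : ℤ × ℤ, (u.1 * h, u.2 * h) = h • u := fun u => by
    ext <;> simp [mul_comm]
  simp only [Function.comp_apply, hsmul, map_zsmul]

def basisEquiv (v w : ℤ × ℤ) (hvw : v.1 * w.2 - v.2 * w.1 = 1) : ℤ × ℤ ≃+ ℤ × ℤ where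
  toFun p := (p.1 * v.1 + p.2 * w.1, p.1 * v.2 + p.2 * w.2)
  invFun q := (w.2 * q.1 - w.1 * q.2, v.1 * q.2 - v.2 * q.1)
  left_inv p := by
    ext
    · linear_combination p.1 * hvw
    · linear_combination p.2 * hvw
  right_inv q := by
    ext
    · linear_combination q.1 * hvw
    · linear_combination q.2 * hvw
  map_add' p q := by ext <;> simp only [Prod.fst_add, Prod.snd_add] <;> ring

theorem card_Ipm (H : ℤ) : #(Ipm H) = (2 * H - 1).toNat := by
  rw [Ipm, Int.card_Ioo]
  ring_nf

theorem le_card_Ipm (H : ℕ) : H ≤ #(Ipm (H : ℤ)) := by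
  rw [card_Ipm]
  omega

theorem Ico_sub_Ipm_subset (a b H : ℤ) : Ico a b - Ipm H ⊆ Ioo (a - H) (b + H) := by
  intro z hz
  obtain ⟨x, hx, h, hh, rfl⟩ := mem_sub.1 hz
  simp only [Ipm, mem_Ico, mem_Ioo] at hx hh ⊢
  omega

theorem Ipm_sub_Ipm_subset (N H : ℤ) : Ipm N - Ipm H ⊆ Ipm (N + H) := by
  intro z hz
  obtain ⟨x, hx, h, hh, rfl⟩ := mem_sub.1 hz
  simp only [Ipm, mem_Ioo] at hx hh ⊢
  omega

theorem card_Ico_sub_Ipm_le {H N : ℕ} (hHN : H ≤ N) : #(Ico 0 (2 * N : ℤ) - Ipm H) ≤ 4 * N := by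
  have := card_le_card (Ico_sub_Ipm_subset 0 (2 * N) H)
  rw [Int.card_Ioo] at this
  omega

theorem card_Ipm_sub_Ipm_le {H N : ℕ} (hHN : H ≤ N) : #(Ipm (N : ℤ) - Ipm H) ≤ 4 * N := by
  have := card_le_card (Ipm_sub_Ipm_subset N H)
  rw [card_Ipm] at this
  omega

def axisBoxSum (g : ℤ × ℤ → ℂ) (E : Finset ℤ) : ℂ :=
  ∑ h₁ ∈ E, ∑ h₂ ∈ E, ∑ h₁' ∈ E, ∑ h₂' ∈ E, ∑' x : ℤ × ℤ,
    g (x.1 + h₁, x.2 + h₂) * conj (g (x.1 + h₁', x.2 + h₂)) *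
      (conj (g (x.1 + h₁, x.2 + h₂')) * g (x.1 + h₁', x.2 + h₂'))

theorem boxPow_axes (E : Finset ℤ) (g : ℤ × ℤ → ℂ) :
    boxPow ![dil (1, 0) E, dil (0, 1) E] g = axisBoxSum g E / (#E : ℂ) ^ 4 := by
  have h₁ : ((1, 0) : ℤ × ℤ) ≠ 0 := by simp
  have h₂ : ((0, 1) : ℤ × ℤ) ≠ 0 := by simp
  rw [boxPow_pair, card_dil h₁, card_dil h₂]
  simp only [sum_dil h₁, sum_dil h₂, axisBoxSum]
  have hshift (x : ℤ × ℤ) (a b : ℤ) : x + (a, 0) + (0, b) = (x.1 + a, x.2 + b) := by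
    ext <;> simp
  simp only [one_mul, zero_mul, hshift]
  ring

def rowCorr (g : ℤ × ℤ → ℂ) (E : Finset ℤ) (a y y' : ℤ) : ℂ :=
  ∑ h ∈ E, g (a + h, y) * conj (g (a + h, y'))

section RowCorr

variable {g : ℤ × ℤ → ℂ} {E : Finset ℤ}

theorem norm_rowCorr_le (hg : Bounded1 g) (a y y' : ℤ) : ‖rowCorr g E a y y'‖ ≤ #E := by
  refine (norm_sum_le _ _).trans ?_
  rw [← nsmul_one, ← sum_const]
  refine sum_le_sum fun h _ => ?_
  rw [norm_mul, Complex.norm_conj]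
  exact mul_le_one₀ (hg _) (norm_nonneg _) (hg _)

theorem sum_sum_eq_normSq_rowCorr (g : ℤ × ℤ → ℂ) (E : Finset ℤ) (a y y' : ℤ) :
    ∑ h₁ ∈ E, ∑ h₁' ∈ E, g (a + h₁, y) * conj (g (a + h₁', y)) *
      (conj (g (a + h₁, y')) * g (a + h₁', y')) = Complex.normSq (rowCorr g E a y y') := by
  rw [← Complex.mul_conj, rowCorr, map_sum, sum_mul_sum]
  refine sum_congr rfl fun h₁ _ => sum_congr rfl fun h₁' _ => ?_
  simp only [map_mul, Complex.conj_conj]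
  ring

theorem axisBoxSum_eq_sum_normSq {X Y : Finset ℤ} (hsupp : ∀ p, g p ≠ 0 → p.1 ∈ X ∧ p.2 ∈ Y) :
    axisBoxSum g E = ∑ h₂' ∈ E, ∑ x ∈ (X - E) ×ˢ (Y - E), ∑ h₂ ∈ E,
      (Complex.normSq (rowCorr g E x.1 (x.2 + h₂) (x.2 + h₂')) : ℂ) := by
  set W := (X - E) ×ˢ (Y - E)
  set T : ℤ → ℤ → ℤ → ℤ → ℤ × ℤ → ℂ := fun h₁ h₂ h₁' h₂' x =>
    g (x.1 + h₁, x.2 + h₂) * conj (g (x.1 + h₁', x.2 + h₂)) *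
      (conj (g (x.1 + h₁, x.2 + h₂')) * g (x.1 + h₁', x.2 + h₂')) with hT
  have hW : ∀ h₁ ∈ E, ∀ h₂ ∈ E, ∀ h₁' h₂', Function.support (T h₁ h₂ h₁' h₂') ⊆ W := by
    intro h₁ hh₁ h₂ hh₂ h₁' h₂' x hx
    obtain ⟨hX, hY⟩ := hsupp _ (left_ne_zero_of_mul (left_ne_zero_of_mul hx))
    exact mem_product.2 ⟨mem_sub.2 ⟨_, hX, h₁, hh₁, by simp⟩, mem_sub.2 ⟨_, hY, h₂, hh₂, by simp⟩⟩
  calc axisBoxSum g E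
      = ∑ h₁ ∈ E, ∑ h₂ ∈ E, ∑ h₁' ∈ E, ∑ h₂' ∈ E, ∑ x ∈ W, T h₁ h₂ h₁' h₂' x :=
        sum_congr rfl fun h₁ hh₁ => sum_congr rfl fun h₂ hh₂ => sum_congr rfl fun h₁' _ =>
          sum_congr rfl fun h₂' _ => tsum_eq_sum' (hW h₁ hh₁ h₂ hh₂ h₁' h₂')
    _ = ∑ h₂ ∈ E, ∑ h₂' ∈ E, ∑ x ∈ W, ∑ h₁ ∈ E, ∑ h₁' ∈ E, T h₁ h₂ h₁' h₂' x := by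
        rw [sum_comm]
        refine sum_congr rfl fun h₂ _ => ?_
        rw [sum_congr rfl fun h₁ _ => sum_comm_cycle.symm]
        exact sum_comm_cycle.symm
    _ = ∑ h₂ ∈ E, ∑ h₂' ∈ E, ∑ x ∈ W,
          (Complex.normSq (rowCorr g E x.1 (x.2 + h₂) (x.2 + h₂')) : ℂ) := by
        simp only [hT, sum_sum_eq_normSq_rowCorr]
    _ = _ := sum_comm_cycle.symm

end RowCorr

def rowWitness (g : ℤ × ℤ → ℂ) (E : Finset ℤ) (a y₀ : ℤ) (x : ℤ) : ℂ :=
  if x - a ∈ E then conj (g (x, y₀)) else 0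

def colWitness (g : ℤ × ℤ → ℂ) (E : Finset ℤ) (a b y₀ : ℤ) (y : ℤ) : ℂ :=
  if y - b ∈ E then conj (rowCorr g E a y y₀) / #E else 0

section Witness

variable {g : ℤ × ℤ → ℂ} {E : Finset ℤ}

theorem bounded1_rowWitness (hg : Bounded1 g) (a y₀ : ℤ) : Bounded1 (rowWitness g E a y₀) := by
  intro x
  unfold rowWitness
  split_ifs
  · simpa using hg (x, y₀)
  · simp

theorem bounded1_colWitness (hg : Bounded1 g) (a b y₀ : ℤ) : Bounded1 (colWitness g E a b y₀) := by
  intro y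
  unfold colWitness
  split_ifs with hy
  · have hE : (0 : ℝ) < #E := by exact_mod_cast card_pos.2 ⟨_, hy⟩
    rw [norm_div, Complex.norm_conj, Complex.norm_natCast, div_le_one hE]
    exact norm_rowCorr_le hg a y y₀
  · simp

theorem card_mul_re_tsum_witness (g : ℤ × ℤ → ℂ) (E : Finset ℤ) (a b y₀ : ℤ) :
    #E * (∑' p : ℤ × ℤ, g p * rowWitness g E a y₀ p.1 * colWitness g E a b y₀ p.2).re =
      ∑ h ∈ E, Complex.normSq (rowCorr g E a (b + h) y₀) := by
  rcases E.eq_empty_or_nonempty with rfl | hE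
  · simp
  have hterm : ∀ h ∈ E, ∀ h₂ ∈ E, g (a + h, b + h₂) * rowWitness g E a y₀ (a + h) *
      colWitness g E a b y₀ (b + h₂) =
        g (a + h, b + h₂) * conj (g (a + h, y₀)) * (conj (rowCorr g E a (b + h₂) y₀) / #E) := by
    intro h hh h₂ hh₂
    simp [rowWitness, colWitness, hh, hh₂]
  rw [← (Equiv.addLeft (a, b)).tsum_eq]
  simp only [Equiv.coe_addLeft, Prod.fst_add, Prod.snd_add]
  rw [tsum_eq_sum' (s := E ×ˢ E) ?supp, sum_product]
  case supp =>
    intro q hq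
    simp only [Function.mem_support, rowWitness, colWitness, add_sub_cancel_left] at hq
    split_ifs at hq with h₁ h₂ <;> simp_all
  simp only [Prod.mk_add_mk]
  rw [sum_congr rfl fun h hh => sum_congr rfl fun h₂ hh₂ => hterm h hh h₂ hh₂, sum_comm]
  simp only [← sum_mul]
  change (#E : ℝ) * (∑ h ∈ E, rowCorr g E a (b + h) y₀ *
    (conj (rowCorr g E a (b + h) y₀) / #E)).re = _
  have hE' : (#E : ℝ) ≠ 0 := by exact_mod_cast hE.card_pos.ne'
  simp only [mul_div_assoc', Complex.mul_conj, ← sum_div, ← Complex.ofReal_sum,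
    Complex.div_natCast_re, Complex.ofReal_re]
  field_simp

end Witness

theorem exists_bounded_corr_of_axisBoxSum {g : ℤ × ℤ → ℂ} (hg : Bounded1 g) (E : Finset ℤ)
    {X Y : Finset ℤ} (hsupp : ∀ p, g p ≠ 0 → p.1 ∈ X ∧ p.2 ∈ Y) :
    ∃ b₁ b₂ : ℤ → ℂ, Bounded1 b₁ ∧ Bounded1 b₂ ∧
      (axisBoxSum g E).re ≤
        #E ^ 2 * #(X - E) * #(Y - E) * (∑' p : ℤ × ℤ, g p * b₁ p.1 * b₂ p.2).re := by
  obtain ⟨⟨h₂', x⟩, hle⟩ := exists_sum_le_card_mul (E ×ˢ ((X - E) ×ˢ (Y - E)))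
    fun i => ∑ h₂ ∈ E, Complex.normSq (rowCorr g E i.2.1 (i.2.2 + h₂) (i.2.2 + i.1))
  refine ⟨rowWitness g E x.1 (x.2 + h₂'), colWitness g E x.1 x.2 (x.2 + h₂'),
    bounded1_rowWitness hg _ _, bounded1_colWitness hg _ _ _, ?_⟩
  rw [axisBoxSum_eq_sum_normSq hsupp]
  simp only [← Complex.ofReal_sum, Complex.ofReal_re]
  rw [sum_product, card_product, card_product, ← card_mul_re_tsum_witness] at hle
  calc _ ≤ _ := hle
    _ = _ := by push_cast; ring

theorem correlation_lower_bound {δ N e X Y c : ℝ} (hδ : 0 < δ) (hN : 0 < N) (he : δ * N ≤ e)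
    (hX₀ : 0 ≤ X) (hX : X ≤ 4 * N) (hY₀ : 0 ≤ Y) (hY : Y ≤ 4 * N)
    (h : δ * N ^ 2 * e ^ 4 ≤ e ^ 2 * X * Y * c) : 1 / 16 * δ ^ 3 * N ^ 2 ≤ c := by
  have he₀ : 0 < e := lt_of_lt_of_le (by positivity) he
  have hc : 0 < c := by
    by_contra! hc
    have : e ^ 2 * X * Y * c ≤ 0 := mul_nonpos_of_nonneg_of_nonpos (by positivity) hc
    have : 0 < δ * N ^ 2 * e ^ 4 := by positivity
    linarith
  have hkey : δ * N ^ 2 * e ^ 4 ≤ e ^ 2 * (4 * N) * (4 * N) * c := h.trans (by gcongr)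
  have hsq : δ * e ^ 2 ≤ 16 * c :=
    le_of_mul_le_mul_right (by linarith) (by positivity : 0 < N ^ 2 * e ^ 2)
  calc 1 / 16 * δ ^ 3 * N ^ 2 = 1 / 16 * δ * (δ * N) ^ 2 := by ring
    _ ≤ 1 / 16 * δ * e ^ 2 := by gcongr
    _ ≤ c := by linarith

theorem exists_corr_of_boxPow_axes {δ : ℝ} (hδ : 0 < δ) {H N : ℕ} (hδN : δ * N ≤ H)
    (hHN : H ≤ N) {g : ℤ × ℤ → ℂ} (hg : Bounded1 g)
    (hsupp : ∀ p, g p ≠ 0 → p.1 ∈ Ico 0 (2 * N : ℤ) ∧ p.2 ∈ Ipm N)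
    (hbox : δ * N ^ 2 ≤ (boxPow ![dil (1, 0) (Ipm H), dil (0, 1) (Ipm H)] g).re) :
    ∃ b₁ b₂ : ℤ → ℂ, Bounded1 b₁ ∧ Bounded1 b₂ ∧
      1 / 16 * δ ^ 3 * N ^ 2 ≤ (∑' p : ℤ × ℤ, g p * b₁ p.1 * b₂ p.2).re := by
  rcases N.eq_zero_or_pos with rfl | hN
  · exact ⟨0, 0, by simp [Bounded1], by simp [Bounded1], by simp⟩
  obtain ⟨b₁, b₂, hb₁, hb₂, hcorr⟩ := exists_bounded_corr_of_axisBoxSum hg (Ipm H) hsupp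
  refine ⟨b₁, b₂, hb₁, hb₂, ?_⟩
  have hE : δ * N ≤ #(Ipm (H : ℤ)) := hδN.trans (by exact_mod_cast le_card_Ipm H)
  have hE₀ : (0 : ℝ) < #(Ipm (H : ℤ)) := lt_of_lt_of_le (by positivity) hE
  rw [boxPow_axes, ← Complex.ofReal_natCast, ← Complex.ofReal_pow, Complex.div_ofReal_re,
    le_div_iff₀ (by positivity)] at hbox
  exact correlation_lower_bound hδ (by exact_mod_cast hN) hE (Nat.cast_nonneg _)
    (by exact_mod_cast card_Ico_sub_Ipm_le hHN) (Nat.cast_nonneg _)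
    (by exact_mod_cast card_Ipm_sub_Ipm_le hHN) (hbox.trans hcorr)

theorem exists_corr_of_boxPow_basis (v w : ℤ × ℤ) (hvw : v.1 * w.2 - v.2 * w.1 = 1) {δ : ℝ}
    (hδ : 0 < δ) {H N : ℕ} (hδN : δ * N ≤ H) (hHN : H ≤ N) {f : ℤ × ℤ → ℂ} (hf : Bounded1 f)
    (hsupp : ∀ a b : ℤ, f (a * v.1 + b * w.1, a * v.2 + b * w.2) ≠ 0 →
      a ∈ Ico 0 (2 * N : ℤ) ∧ b ∈ Ipm N)
    (hbox : δ * N ^ 2 ≤ (boxPow ![dil v (Ipm H), dil w (Ipm H)] f).re) :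
    ∃ b₁ b₂ : ℤ → ℂ, Bounded1 b₁ ∧ Bounded1 b₂ ∧ 1 / 16 * δ ^ 3 * N ^ 2 ≤
      (∑' x : ℤ, ∑' y : ℤ, f (x, y) * b₁ (w.2 * x - w.1 * y) * b₂ (v.1 * y - v.2 * x)).re := by
  set φ := basisEquiv v w hvw
  have hdir : (fun i => (![dil (1, 0) (Ipm H), dil (0, 1) (Ipm H)] i).image φ) =
      ![dil v (Ipm H), dil w (Ipm H)] := by
    have hv : φ (1, 0) = v := by simp [φ, basisEquiv]
    have hw : φ (0, 1) = w := by simp [φ, basisEquiv]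
    ext i : 1
    fin_cases i
    · rw [← hv]; exact image_dil φ.toAddMonoidHom _ _
    · rw [← hw]; exact image_dil φ.toAddMonoidHom _ _
  rw [← hdir, boxPow_image_addEquiv] at hbox
  obtain ⟨b₁, b₂, hb₁, hb₂, hcorr⟩ := exists_corr_of_boxPow_axes hδ hδN hHN (fun p => hf (φ p))
    (fun p hp => hsupp p.1 p.2 hp) hbox
  refine ⟨b₁, b₂, hb₁, hb₂, ?_⟩
  have hfin : (Function.support fun q => f q * b₁ (φ.symm q).1 * b₂ (φ.symm q).2).Finite := by
    refine (finite_toSet ((Ico 0 (2 * N : ℤ) ×ˢ Ipm N).image φ)).subset fun q hq => ?_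
    have hq' : f (φ (φ.symm q)) ≠ 0 := by
      rw [φ.apply_symm_apply]
      exact left_ne_zero_of_mul (left_ne_zero_of_mul hq)
    exact mem_image.2 ⟨φ.symm q, mem_product.2 (hsupp _ _ hq'), φ.apply_symm_apply q⟩
  calc 1 / 16 * δ ^ 3 * N ^ 2 ≤ (∑' p, f (φ p) * b₁ p.1 * b₂ p.2).re := hcorr
    _ = (∑' q, f q * b₁ (φ.symm q).1 * b₂ (φ.symm q).2).re := by
      rw [← φ.toEquiv.tsum_eq fun q => f q * b₁ (φ.symm q).1 * b₂ (φ.symm q).2]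
      simp
    _ = _ := congrArg Complex.re (summable_of_hasFiniteSupport hfin).tsum_prod

/-- the `U¹ × U¹` inverse theorem. -/
theorem stmt16 :
    ∃ c : ℝ, 0 < c ∧
      ∀ δ : ℝ, 0 < δ → δ ≤ 1 →
      ∀ H N : ℕ, δ * (N : ℝ) ≤ (H : ℝ) → H ≤ N →
      ∀ f : ℤ × ℤ → ℂ, Bounded1 f → SuppOn2 (N : ℤ) f →
        ((δ * (N : ℝ) ^ 2 ≤
            (boxPow ![dil (1, 0) (Ipm (H : ℤ)), dil (0, 1) (Ipm (H : ℤ))] f).re →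
            ∃ b1 b2 : ℤ → ℂ, Bounded1 b1 ∧ Bounded1 b2 ∧
              c * δ ^ 3 * (N : ℝ) ^ 2 ≤
                (∑' x : ℤ, ∑' y : ℤ, f (x, y) * b1 x * b2 y).re) ∧
          (δ * (N : ℝ) ^ 2 ≤
            (boxPow ![dil (1, 0) (Ipm (H : ℤ)), dil (-1, 1) (Ipm (H : ℤ))] f).re →
            ∃ b1 b2 : ℤ → ℂ, Bounded1 b1 ∧ Bounded1 b2 ∧
              c * δ ^ 3 * (N : ℝ) ^ 2 ≤
                (∑' x : ℤ, ∑' y : ℤ, f (x, y) * b1 (x + y) * b2 y).re) ∧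
          (δ * (N : ℝ) ^ 2 ≤
            (boxPow ![dil (0, 1) (Ipm (H : ℤ)), dil (-1, 1) (Ipm (H : ℤ))] f).re →
            ∃ b1 b2 : ℤ → ℂ, Bounded1 b1 ∧ Bounded1 b2 ∧
              c * δ ^ 3 * (N : ℝ) ^ 2 ≤
                (∑' x : ℤ, ∑' y : ℤ, f (x, y) * b1 x * b2 (x + y)).re)) := by
  refine ⟨1 / 16, by norm_num, fun δ hδ _ H N hδN hHN f hf hsupp => ?_⟩
  have hsupp' (p : ℤ × ℤ) (hp : f p ≠ 0) : 0 ≤ p.1 ∧ p.1 < N ∧ 0 ≤ p.2 ∧ p.2 < N := by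
    simpa [I0, and_assoc] using hsupp p hp
  refine ⟨fun hbox => ?_, fun hbox => ?_, fun hbox => ?_⟩
  · simpa using exists_corr_of_boxPow_basis (1, 0) (0, 1) (by norm_num) hδ hδN hHN hf
      (fun a b hab => by have := hsupp' _ hab; simp [Ipm] at this ⊢; omega) hbox
  · simpa using exists_corr_of_boxPow_basis (1, 0) (-1, 1) (by norm_num) hδ hδN hHN hf
      (fun a b hab => by have := hsupp' _ hab; simp [Ipm] at this ⊢; omega) hbox
  · obtain ⟨b₁, b₂, hb₁, hb₂, hcorr⟩ := exists_corr_of_boxPow_basis (0, 1) (-1, 1) (by norm_num)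
      hδ hδN hHN hf
      (fun a b hab => by have := hsupp' _ hab; simp [Ipm] at this ⊢; omega) hbox
    refine ⟨fun x => b₂ (-x), b₁, fun x => hb₂ (-x), hb₁, ?_⟩
    simpa [mul_right_comm _ (b₂ _)] using hcorr
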